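/- Let N be a natural number and α, β real numbers with α > -1 and β > -1. Define the Hahn polynomial values Q_n(x; α, β, N) = ∑_{k=0}^{n} ((-n)_k (n + α + β + 1)_k (-x)_k) / ((α + 1)_k (-N)_k k!) for natural numbers n ≤ N and x ∈ {0, 1, ..., N}. Then for all natural numbers n, m with n ≤ N, m ≤ N and n ≠ m, the orthogonality relation holds: ∑_{x=0}^{N} ((α + 1)_x / x!) · ((β + 1)_{N-x} / (N - x)!) · Q_n(x; α, β, N) · Q_m(x; α, β, N) = 0. -/
import Mathlib


/-- Pochhammer symbol (rising factorial) for a real number. -/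
noncomputable def poch (a : ℝ) (k : ℕ) : ℝ := (ascPochhammer ℝ k).eval a

/-- The Hahn polynomial value Q_n(x; α, β, N) = ₃F₂(-n, n+α+β+1, -x; α+1, -N; 1). -/
noncomputable def hahnQ (α β : ℝ) (N n : ℕ) (x : ℝ) : ℝ :=
  ∑ k ∈ Finset.range (n + 1),
    (poch (-(n : ℝ)) k * poch ((n : ℝ) + α + β + 1) k * poch (-x) k) /
      (poch (α + 1) k * poch (-(N : ℝ)) k * (Nat.factorial k : ℝ))

lemma poch_zero (a : ℝ) : poch a 0 = 1 := by simp [poch]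

lemma poch_one (a : ℝ) : poch a 1 = a := by simp [poch]

lemma poch_succ (a : ℝ) (k : ℕ) : poch a (k+1) = poch a k * (a + k) := by
  simp [poch, ascPochhammer_succ_right]

lemma poch_succ_left (a : ℝ) (k : ℕ) : poch a (k+1) = a * poch (a+1) k := by
  simp [poch, ascPochhammer_succ_left, Polynomial.eval_comp]


lemma poch_pos {a : ℝ} (ha : 0 < a) : ∀ k, 0 < poch a k
  | 0 => by rw [poch_zero]; norm_num
  | k+1 => by
      rw [poch_succ]
      exact mul_pos (poch_pos ha k) (by positivity)


lemma poch_neg_nat_ne_zero {N : ℕ} : ∀ {k : ℕ}, k ≤ N → poch (-(N:ℝ)) k ≠ 0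
  | 0, _ => by rw [poch_zero]; norm_num
  | k+1, h => by
      rw [poch_succ]
      have hk : (k:ℝ) < N := by exact_mod_cast Nat.lt_of_succ_le h
      exact mul_ne_zero (poch_neg_nat_ne_zero (Nat.le_of_succ_le h)) (by linarith)


lemma Lphi (α β : ℝ) (N : ℕ) (k : ℕ) (x : ℝ) :
    (x+α+1)*(x-(N:ℝ)) * poch (-(x+1)) k + x*(x-β-(N:ℝ)-1) * poch (-(x-1)) k
      - ((x+α+1)*(x-(N:ℝ)) + x*(x-β-(N:ℝ)-1)) * poch (-x) k
    = (k:ℝ)*((k:ℝ)+α+β+1) * poch (-x) k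
      - (k:ℝ)*((k:ℝ)+α)*((k:ℝ)-(N:ℝ)-1) * poch (-x) (k-1) := by
  match k with
  | 0 => simp only [poch_zero]; push_cast; ring
  | 1 => simp only [show (1:ℕ)-1 = 0 from rfl, poch_one, poch_zero]; push_cast; ring
  | (j+2) =>
    have h1 : poch (-(x+1)) (j+2) = (-(x+1)) * ((-x) * poch (-x+1) j) := by
      rw [poch_succ_left, show -(x+1)+1 = -x by ring, poch_succ_left]
    have h2 : poch (-(x-1)) (j+2) = poch (-x+1) j * (-x+1+j) * (-x+1+(j+1)) := by
      rw [show -(x-1) = -x+1 by ring, poch_succ, poch_succ]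
      push_cast; ring
    have h3 : poch (-x) (j+2) = (-x) * (poch (-x+1) j * (-x+1+j)) := by
      rw [poch_succ_left, poch_succ]
    have h4 : poch (-x) (j+2-1) = (-x) * poch (-x+1) j := by
      rw [show j+2-1 = j+1 from rfl, poch_succ_left]
    rw [h1, h2, h3, h4]
    push_cast
    ring


noncomputable def hahnC (α β : ℝ) (N n : ℕ) (k : ℕ) : ℝ :=
  poch (-(n:ℝ)) k * poch ((n:ℝ)+α+β+1) k /
    (poch (α+1) k * poch (-(N:ℝ)) k * (Nat.factorial k : ℝ))

lemma hahnQ_eq (α β : ℝ) (N n : ℕ) (y : ℝ) :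
    hahnQ α β N n y = ∑ k ∈ Finset.range (n+1), hahnC α β N n k * poch (-y) k := by
  unfold hahnQ hahnC
  exact Finset.sum_congr rfl (fun k _ => by ring)

lemma coeff_step (α β : ℝ) (hα : α > -1) (N n k : ℕ) (hk : k < n) (hn : n ≤ N) :
    hahnC α β N n k * ((k:ℝ)*((k:ℝ)+α+β+1) - (n:ℝ)*((n:ℝ)+α+β+1)) =
    hahnC α β N n (k+1) * (((k:ℝ)+1)*(((k:ℝ)+1)+α)*(((k:ℝ)+1)-(N:ℝ)-1)) := by
  have h1 : poch (α+1) k ≠ 0 := ne_of_gt (poch_pos (by linarith) k)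
  have h2 : poch (-(N:ℝ)) k ≠ 0 := poch_neg_nat_ne_zero (le_of_lt (lt_of_lt_of_le hk hn))
  have h3 : (Nat.factorial k : ℝ) ≠ 0 := by exact_mod_cast Nat.factorial_ne_zero k
  have hk0 : (0:ℝ) ≤ k := Nat.cast_nonneg k
  have h4 : α + 1 + (k:ℝ) ≠ 0 := by intro h; linarith [h ▸ (by linarith : (0:ℝ) < α + 1 + k)]
  have hkN : (k:ℝ) < N := by exact_mod_cast lt_of_lt_of_le hk hn
  have h5 : -(N:ℝ) + (k:ℝ) ≠ 0 := by linarith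
  have h6 : ((k:ℝ)+1) ≠ 0 := by positivity
  unfold hahnC
  rw [poch_succ, poch_succ, poch_succ, poch_succ, Nat.factorial_succ]
  push_cast
  field_simp
  ring


lemma diffeq (α β : ℝ) (hα : α > -1) (N n : ℕ) (hn : n ≤ N) (x : ℝ) :
    (x+α+1)*(x-(N:ℝ)) * hahnQ α β N n (x+1) + x*(x-β-(N:ℝ)-1) * hahnQ α β N n (x-1)
      - ((x+α+1)*(x-(N:ℝ)) + x*(x-β-(N:ℝ)-1)) * hahnQ α β N n x
    = (n:ℝ)*((n:ℝ)+α+β+1) * hahnQ α β N n x := by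
  rw [← sub_eq_zero]
  have h2 : (x+α+1)*(x-(N:ℝ)) * hahnQ α β N n (x+1) + x*(x-β-(N:ℝ)-1) * hahnQ α β N n (x-1)
      - ((x+α+1)*(x-(N:ℝ)) + x*(x-β-(N:ℝ)-1)) * hahnQ α β N n x
      - (n:ℝ)*((n:ℝ)+α+β+1) * hahnQ α β N n x
      = ∑ k ∈ Finset.range (n+1),
          (hahnC α β N n k * (((k:ℝ)*((k:ℝ)+α+β+1) - (n:ℝ)*((n:ℝ)+α+β+1)) * poch (-x) k)
            - hahnC α β N n k * ((k:ℝ)*((k:ℝ)+α)*((k:ℝ)-(N:ℝ)-1) * poch (-x) (k-1))) := by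
    simp only [hahnQ_eq, Finset.mul_sum, ← Finset.sum_sub_distrib, ← Finset.sum_add_distrib]
    exact Finset.sum_congr rfl (fun k _ => by
      linear_combination (hahnC α β N n k) * Lphi α β N k x)
  rw [h2, Finset.sum_sub_distrib]
  rw [Finset.sum_range_succ, Finset.sum_range_succ']
  simp only [sub_self, zero_mul, mul_zero, add_zero, Nat.cast_zero, Nat.cast_add,
    Nat.cast_one, Nat.add_sub_cancel]
  rw [sub_eq_zero]
  refine Finset.sum_congr rfl (fun k hk => ?_)
  have hkn : k < n := Finset.mem_range.mp hk
  linear_combination poch (-x) k * coeff_step α β hα N n k hkn hn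


lemma selfadj (α β : ℝ) (N x : ℕ) (hx : x < N) :
    (poch (α+1) (x+1) / (Nat.factorial (x+1) : ℝ)) *
      (poch (β+1) (N-(x+1)) / (Nat.factorial (N-(x+1)) : ℝ)) *
      (((x:ℝ)+1)*(((x:ℝ)+1)-β-(N:ℝ)-1))
    = (poch (α+1) x / (Nat.factorial x : ℝ)) *
      (poch (β+1) (N-x) / (Nat.factorial (N-x) : ℝ)) *
      (((x:ℝ)+α+1)*((x:ℝ)-(N:ℝ))) := by
  have hNx : N - x = (N - (x+1)) + 1 := by omega
  set d := N - (x+1) with hd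
  have hdc : (d:ℝ) = (N:ℝ) - (x:ℝ) - 1 := by
    rw [hd]; push_cast [Nat.succ_le_of_lt hx]; ring
  rw [hNx]
  have h1 : ((Nat.factorial (x+1) : ℝ)) ≠ 0 := by exact_mod_cast Nat.factorial_ne_zero (x+1)
  have h2 : ((Nat.factorial d : ℝ)) ≠ 0 := by exact_mod_cast Nat.factorial_ne_zero d
  have h3 : ((Nat.factorial x : ℝ)) ≠ 0 := by exact_mod_cast Nat.factorial_ne_zero x
  have h4 : ((Nat.factorial (d+1) : ℝ)) ≠ 0 := by exact_mod_cast Nat.factorial_ne_zero (d+1)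
  rw [div_mul_div_comm, div_mul_eq_mul_div, div_mul_div_comm, div_mul_eq_mul_div,
      div_eq_div_iff (mul_ne_zero h1 h2) (mul_ne_zero h3 h4)]
  rw [poch_succ, poch_succ, Nat.factorial_succ, Nat.factorial_succ]
  push_cast
  rw [hdc]
  ring


lemma abel (α β : ℝ) (hα : α > -1) (N n m : ℕ) (hn : n ≤ N) (hm : m ≤ N) :
    (n:ℝ)*((n:ℝ)+α+β+1) *
      ∑ x ∈ Finset.range (N + 1),
        (poch (α + 1) x / (Nat.factorial x : ℝ)) *
          (poch (β + 1) (N - x) / (Nat.factorial (N - x) : ℝ)) *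
          hahnQ α β N n (x : ℝ) * hahnQ α β N m (x : ℝ)
    = ∑ x ∈ Finset.range N,
        ((poch (α + 1) x / (Nat.factorial x : ℝ)) *
          (poch (β + 1) (N - x) / (Nat.factorial (N - x) : ℝ)) *
          (((x:ℝ)+α+1)*((x:ℝ)-(N:ℝ)))) *
          ((hahnQ α β N n ((x:ℝ)+1) - hahnQ α β N n (x:ℝ)) *
           (hahnQ α β N m (x:ℝ) - hahnQ α β N m ((x:ℝ)+1))) := by
  rw [Finset.mul_sum]
  have step1 : ∀ x ∈ Finset.range (N+1),
      (n:ℝ)*((n:ℝ)+α+β+1) *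
        ((poch (α + 1) x / (Nat.factorial x : ℝ)) *
          (poch (β + 1) (N - x) / (Nat.factorial (N - x) : ℝ)) *
          hahnQ α β N n (x : ℝ) * hahnQ α β N m (x : ℝ))
      = ((poch (α + 1) x / (Nat.factorial x : ℝ)) *
          (poch (β + 1) (N - x) / (Nat.factorial (N - x) : ℝ)) *
          (((x:ℝ)+α+1)*((x:ℝ)-(N:ℝ)))) *
          ((hahnQ α β N n ((x:ℝ)+1) - hahnQ α β N n (x:ℝ)) * hahnQ α β N m (x:ℝ))
        - ((poch (α + 1) x / (Nat.factorial x : ℝ)) *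
          (poch (β + 1) (N - x) / (Nat.factorial (N - x) : ℝ)) *
          ((x:ℝ)*((x:ℝ)-β-(N:ℝ)-1))) *
          ((hahnQ α β N n (x:ℝ) - hahnQ α β N n ((x:ℝ)-1)) * hahnQ α β N m (x:ℝ)) := by
    intro x _
    linear_combination (-((poch (α + 1) x / (Nat.factorial x : ℝ)) *
          (poch (β + 1) (N - x) / (Nat.factorial (N - x) : ℝ)) * hahnQ α β N m (x:ℝ))) *
      diffeq α β hα N n hn (x:ℝ)
  rw [Finset.sum_congr rfl step1, Finset.sum_sub_distrib]
  rw [Finset.sum_range_succ, Finset.sum_range_succ']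
  have hlast : ((poch (α + 1) N / (Nat.factorial N : ℝ)) *
          (poch (β + 1) (N - N) / (Nat.factorial (N - N) : ℝ)) *
          (((N:ℝ)+α+1)*((N:ℝ)-(N:ℝ)))) *
          ((hahnQ α β N n ((N:ℝ)+1) - hahnQ α β N n (N:ℝ)) * hahnQ α β N m (N:ℝ)) = 0 := by
    simp
  have hfirst : ((poch (α + 1) 0 / (Nat.factorial 0 : ℝ)) *
          (poch (β + 1) (N - 0) / (Nat.factorial (N - 0) : ℝ)) *
          (((0:ℕ):ℝ)*(((0:ℕ):ℝ)-β-(N:ℝ)-1))) *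
          ((hahnQ α β N n ((0:ℕ):ℝ) - hahnQ α β N n (((0:ℕ):ℝ)-1)) * hahnQ α β N m ((0:ℕ):ℝ)) = 0 := by
    simp
  rw [hlast, hfirst, add_zero, add_zero, ← Finset.sum_sub_distrib]
  refine Finset.sum_congr rfl (fun x hx => ?_)
  have hxN : x < N := Finset.mem_range.mp hx
  have hsa := selfadj α β N x hxN
  push_cast
  rw [show (x:ℝ)+1-1 = (x:ℝ) by ring]
  linear_combination (-((hahnQ α β N n ((x:ℝ)+1) - hahnQ α β N n (x:ℝ)) *
      hahnQ α β N m ((x:ℝ)+1))) * hsa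


/-- Orthogonality of the Hahn polynomials on {0,…,N} with respect to the weight
w(x) = (α+1)_x/x! · (β+1)_{N-x}/(N-x)! (Chebyshev, 1875). -/
theorem hahn_orthogonality (N : ℕ) (α β : ℝ) (hα : α > -1) (hβ : β > -1)
    (n m : ℕ) (hn : n ≤ N) (hm : m ≤ N) (hnm : n ≠ m) :
    ∑ x ∈ Finset.range (N + 1),
        (poch (α + 1) x / (Nat.factorial x : ℝ)) *
          (poch (β + 1) (N - x) / (Nat.factorial (N - x) : ℝ)) *
          hahnQ α β N n (x : ℝ) * hahnQ α β N m (x : ℝ) = 0 := by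
  have h1 := abel α β hα N n m hn hm
  have h2 := abel α β hα N m n hm hn
  have hsum : ∑ x ∈ Finset.range (N + 1),
        (poch (α + 1) x / (Nat.factorial x : ℝ)) *
          (poch (β + 1) (N - x) / (Nat.factorial (N - x) : ℝ)) *
          hahnQ α β N m (x : ℝ) * hahnQ α β N n (x : ℝ)
      = ∑ x ∈ Finset.range (N + 1),
        (poch (α + 1) x / (Nat.factorial x : ℝ)) *
          (poch (β + 1) (N - x) / (Nat.factorial (N - x) : ℝ)) *
          hahnQ α β N n (x : ℝ) * hahnQ α β N m (x : ℝ) :=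
    Finset.sum_congr rfl (fun x _ => by ring)
  have hrhs : ∑ x ∈ Finset.range N,
        ((poch (α + 1) x / (Nat.factorial x : ℝ)) *
          (poch (β + 1) (N - x) / (Nat.factorial (N - x) : ℝ)) *
          (((x:ℝ)+α+1)*((x:ℝ)-(N:ℝ)))) *
          ((hahnQ α β N m ((x:ℝ)+1) - hahnQ α β N m (x:ℝ)) *
           (hahnQ α β N n (x:ℝ) - hahnQ α β N n ((x:ℝ)+1)))
      = ∑ x ∈ Finset.range N,
        ((poch (α + 1) x / (Nat.factorial x : ℝ)) *
          (poch (β + 1) (N - x) / (Nat.factorial (N - x) : ℝ)) *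
          (((x:ℝ)+α+1)*((x:ℝ)-(N:ℝ)))) *
          ((hahnQ α β N n ((x:ℝ)+1) - hahnQ α β N n (x:ℝ)) *
           (hahnQ α β N m (x:ℝ) - hahnQ α β N m ((x:ℝ)+1))) :=
    Finset.sum_congr rfl (fun x _ => by ring)
  have key : ((n:ℝ)*((n:ℝ)+α+β+1) - (m:ℝ)*((m:ℝ)+α+β+1)) *
      ∑ x ∈ Finset.range (N + 1),
        (poch (α + 1) x / (Nat.factorial x : ℝ)) *
          (poch (β + 1) (N - x) / (Nat.factorial (N - x) : ℝ)) *
          hahnQ α β N n (x : ℝ) * hahnQ α β N m (x : ℝ) = 0 := by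
    linear_combination h1 - h2 + ((m:ℝ)*((m:ℝ)+α+β+1)) * hsum - hrhs
  have hne1 : (n:ℝ) - (m:ℝ) ≠ 0 := sub_ne_zero.mpr (by exact_mod_cast hnm)
  have hnm1 : 1 ≤ n + m := by omega
  have hnm1' : (1:ℝ) ≤ (n:ℝ) + (m:ℝ) := by exact_mod_cast hnm1
  have hne2 : (n:ℝ) + (m:ℝ) + α + β + 1 ≠ 0 := by intro h; linarith
  have hne : ((n:ℝ)*((n:ℝ)+α+β+1) - (m:ℝ)*((m:ℝ)+α+β+1)) ≠ 0 := by
    have hfac : (n:ℝ)*((n:ℝ)+α+β+1) - (m:ℝ)*((m:ℝ)+α+β+1)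
        = ((n:ℝ)-(m:ℝ))*((n:ℝ)+(m:ℝ)+α+β+1) := by ring
    rw [hfac]
    exact mul_ne_zero hne1 hne2
  exact (mul_eq_zero.mp key).resolve_left hne
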